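/- arXiv:1408.4359 — 5 statements merged into one kernel-verified Lean document; each statement's English description precedes it below -/
import Mathlib

section
/- For every M > 0 and r > 0 there exists δ > 0 such that for every unital C*-algebra A and all elements a, b ∈ A with ‖a‖ ≤ M, ‖b‖ ≤ M, and ‖ab − ba‖ < δ, one has ‖e^{a+b} e^{−a} e^{−b} − 1‖ < r. -/
/-!
Put `f t = exp (t • (a + b)) * exp (t • -a) * exp (t • -b)`, so that `f 0 = 1` and
`f' t = exp (t • (a + b)) * (b * exp (t • -a) - exp (t • -a) * b) * exp (t • -b)`.
By the mean value inequality on `[0, 1]` it suffices to bound the commutator of `b` with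
`exp (t • -a)` by `exp ‖a‖ * ‖a * b - b * a‖`. That bound comes from the same argument applied to
`s ↦ exp (s • x) * c * exp ((1 - s) • x)`, which runs from `c * exp x` to `exp x * c` with
derivative `exp (s • x) * (x * c - c * x) * exp ((1 - s) • x)`. Altogether
`‖exp (a + b) * exp (-a) * exp (-b) - 1‖ ≤ exp (2 * (‖a‖ + ‖b‖)) * ‖a * b - b * a‖`,
so `δ = r / exp (4 * M)` works.
-/

open NormedSpace Set

theorem norm_smul_le_norm_of_mem_Icc {E : Type*} [SeminormedAddCommGroup E] [NormedSpace ℝ E]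
    {t : ℝ} (ht : t ∈ Icc (0 : ℝ) 1) (x : E) : ‖t • x‖ ≤ ‖x‖ := by
  rw [norm_smul, Real.norm_of_nonneg ht.1]
  exact mul_le_of_le_one_left (norm_nonneg x) ht.2

theorem norm_exp_le_exp_norm {𝔸 : Type*} [NormedRing 𝔸] [NormedAlgebra ℝ 𝔸] [NormOneClass 𝔸]
    (x : 𝔸) : ‖exp x‖ ≤ Real.exp ‖x‖ := by
  rw [exp_eq_tsum ℝ, Real.exp_eq_exp_ℝ, exp_eq_tsum ℝ]
  refine (norm_tsum_le_tsum_norm (norm_expSeries_summable' x)).trans <|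
    (norm_expSeries_summable' x).tsum_le_tsum (fun n => ?_) (expSeries_summable' ‖x‖)
  rw [norm_smul, smul_eq_mul, Real.norm_of_nonneg (by positivity)]
  gcongr
  exact norm_pow_le x n

section

variable {𝔸 : Type*} [NormedRing 𝔸] [NormedAlgebra ℝ 𝔸] [CompleteSpace 𝔸]

theorem norm_exp_mul_sub_mul_exp_le [NormOneClass 𝔸] (x c : 𝔸) :
    ‖exp x * c - c * exp x‖ ≤ Real.exp ‖x‖ * ‖x * c - c * x‖ := by
  have hderiv : ∀ s : ℝ, HasDerivAt (fun s : ℝ => exp (s • x) * c * exp ((1 - s) • x))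
      (exp (s • x) * (x * c - c * x) * exp ((1 - s) • x)) s := by
    intro s
    have hrev := (hasDerivAt_exp_smul_const' x (1 - s)).scomp s ((hasDerivAt_id s).const_sub 1)
    refine (((hasDerivAt_exp_smul_const x s).mul_const c).mul hrev).congr_deriv ?_
    simp only [Function.comp_apply, neg_smul, one_smul]
    noncomm_ring
  have hbound : ∀ s ∈ Ico (0 : ℝ) 1,
      ‖exp (s • x) * (x * c - c * x) * exp ((1 - s) • x)‖ ≤ Real.exp ‖x‖ * ‖x * c - c * x‖ := by
    intro s ⟨hs0, hs1⟩
    calc _ ≤ Real.exp ‖s • x‖ * ‖x * c - c * x‖ * Real.exp ‖(1 - s) • x‖ := by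
          refine norm_mul₃_le.trans ?_
          gcongr <;> exact norm_exp_le_exp_norm _
      _ = Real.exp ‖x‖ * ‖x * c - c * x‖ := by
          rw [norm_smul, norm_smul, Real.norm_of_nonneg hs0, Real.norm_of_nonneg (by linarith),
            mul_right_comm, ← Real.exp_add, ← add_mul, add_sub_cancel, one_mul]
  simpa using norm_image_sub_le_of_norm_deriv_le_segment_01'
    (fun s _ => (hderiv s).hasDerivWithinAt) hbound

theorem hasDerivAt_exp_smul_add_mul_exp_smul_neg_mul_exp_smul_neg (a b : 𝔸) (t : ℝ) :
    HasDerivAt (fun t : ℝ => exp (t • (a + b)) * exp (t • -a) * exp (t • -b))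
      (exp (t • (a + b)) * (b * exp (t • -a) - exp (t • -a) * b) * exp (t • -b)) t := by
  refine (((hasDerivAt_exp_smul_const (a + b) t).mul (hasDerivAt_exp_smul_const' (-a) t)).mul
    (hasDerivAt_exp_smul_const' (-b) t)).congr_deriv ?_
  simp only [Pi.mul_apply]
  noncomm_ring

theorem norm_exp_add_mul_exp_neg_mul_exp_neg_sub_one_le [NormOneClass 𝔸] (a b : 𝔸) :
    ‖exp (a + b) * exp (-a) * exp (-b) - 1‖ ≤ Real.exp (2 * (‖a‖ + ‖b‖)) * ‖a * b - b * a‖ := by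
  have hbound : ∀ t ∈ Ico (0 : ℝ) 1,
      ‖exp (t • (a + b)) * (b * exp (t • -a) - exp (t • -a) * b) * exp (t • -b)‖ ≤
        Real.exp (2 * (‖a‖ + ‖b‖)) * ‖a * b - b * a‖ := by
    intro t ht
    have ht : t ∈ Icc (0 : ℝ) 1 := Ico_subset_Icc_self ht
    have hexp : ∀ y : 𝔸, ‖exp (t • y)‖ ≤ Real.exp ‖y‖ := fun y =>
      (norm_exp_le_exp_norm _).trans (Real.exp_le_exp.2 (norm_smul_le_norm_of_mem_Icc ht y))
    have hcomm : ‖b * exp (t • -a) - exp (t • -a) * b‖ ≤ Real.exp ‖a‖ * ‖a * b - b * a‖ := by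
      have hlin : t • -a * b - b * t • -a = t • (b * a - a * b) := by
        rw [smul_mul_assoc, mul_smul_comm, ← smul_sub]; noncomm_ring
      rw [norm_sub_rev]
      refine (norm_exp_mul_sub_mul_exp_le _ _).trans ?_
      rw [hlin, ← norm_neg a, norm_sub_rev (a * b)]
      gcongr <;> exact norm_smul_le_norm_of_mem_Icc ht _
    calc _ ≤ Real.exp ‖a + b‖ * (Real.exp ‖a‖ * ‖a * b - b * a‖) * Real.exp ‖-b‖ := by
          refine norm_mul₃_le.trans ?_
          gcongr
          exacts [hexp _, hexp _]
      _ ≤ Real.exp (‖a‖ + ‖b‖) * (Real.exp ‖a‖ * ‖a * b - b * a‖) * Real.exp ‖b‖ := by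
          rw [norm_neg]; gcongr; exact norm_add_le a b
      _ = Real.exp (2 * (‖a‖ + ‖b‖)) * ‖a * b - b * a‖ := by
          simp only [two_mul, Real.exp_add]
          ring
  simpa using norm_image_sub_le_of_norm_deriv_le_segment_01'
    (fun t _ => (hasDerivAt_exp_smul_add_mul_exp_smul_neg_mul_exp_smul_neg a b t).hasDerivWithinAt)
    hbound

end

theorem stmt_2_general (M r : ℝ) (hr : 0 < r) :
    ∃ δ : ℝ, 0 < δ ∧
      ∀ (A : Type u) [NormedRing A] [StarRing A] [CStarRing A] [CompleteSpace A]
        [NormedAlgebra ℂ A] [StarModule ℂ A],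
        ∀ a b : A, ‖a‖ ≤ M → ‖b‖ ≤ M → ‖a * b - b * a‖ < δ →
          ‖NormedSpace.exp (a + b) * NormedSpace.exp (-a) * NormedSpace.exp (-b) - 1‖ < r := by
  refine ⟨r / Real.exp (4 * M), by positivity, fun A _ _ _ _ _ _ a b ha hb hab => ?_⟩
  -- `CStarRing` yields `NormOneClass` only for nontrivial `A`
  rcases subsingleton_or_nontrivial A with _ | _
  · simpa [Subsingleton.elim _ (0 : A)] using hr
  calc _ ≤ Real.exp (2 * (‖a‖ + ‖b‖)) * ‖a * b - b * a‖ :=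
        norm_exp_add_mul_exp_neg_mul_exp_neg_sub_one_le a b
    _ ≤ Real.exp (4 * M) * ‖a * b - b * a‖ := by gcongr Real.exp ?_ * _; linarith
    _ < Real.exp (4 * M) * (r / Real.exp (4 * M)) := by gcongr
    _ = r := mul_div_cancel₀ r (Real.exp_pos _).ne'

/-- If `a`, `b` are bounded in norm and almost commute, then
`e^{a+b} e^{-a} e^{-b}` is close to `1`, uniformly over all unital C*-algebras. -/
theorem stmt_2 (M r : ℝ) (hM : 0 < M) (hr : 0 < r) :
    ∃ δ : ℝ, 0 < δ ∧
      ∀ (A : Type u) [NormedRing A] [StarRing A] [CStarRing A] [CompleteSpace A]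
        [NormedAlgebra ℂ A] [StarModule ℂ A],
        ∀ a b : A, ‖a‖ ≤ M → ‖b‖ ≤ M → ‖a * b - b * a‖ < δ →
          ‖NormedSpace.exp (a + b) * NormedSpace.exp (-a) * NormedSpace.exp (-b) - 1‖ < r :=
  stmt_2_general M r hr
end

section
/- Let n ≥ 1 and let h ∈ Mₙ(ℂ) be a selfadjoint matrix with trace 0. Then there exist x₁, x₂ ∈ Mₙ(ℂ) such that: x₁² = x₂² = 0; ‖x₁‖ ≤ ‖h‖^{1/2} and ‖x₂‖ ≤ ‖h‖^{1/2} (operator norms); the selfadjoint matrices h₁ := x₁*x₁ − x₁x₁* and h₂ := x₂*x₂ − x₂x₂* commute; and h = h₁ + h₂. -/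
/-!
Diagonalise `h` by a unitary: its eigenvalues `dᵢ` are real, sum to `0` and satisfy
`|dᵢ| ≤ ‖h‖`. Listing them greedily, always next taking an eigenvalue whose sign is opposite to
the current partial sum, keeps every partial sum `tₘ` in `[-‖h‖, ‖h‖]`, and `t₀ = tₙ = 0`.
Then `dₖ = tₖ₊₁ - tₖ` splits as `aₖ + bₖ`, where `a` is `±t₂ⱼ₊₁` on the pair `{2j, 2j+1}` and
`b` is `±t₂ⱼ` on the pair `{2j-1, 2j}`. A vector taking opposite values on the two points of each
pair of a matching is the self-commutator `x⋆x - xx⋆` of a weighted matching matrix `x`, which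
has `x² = 0` and norm at most the square root of the largest value. Both self-commutators are
diagonal, so they commute.
-/

open scoped Matrix.Norms.L2Operator

open Matrix Function

theorem Real.sqrt_mul_sqrt_neg (a : ℝ) : √a * √(-a) = 0 := by
  rcases le_total 0 a with ha | ha
  · rw [Real.sqrt_eq_zero'.2 (neg_nonpos.2 ha), mul_zero]
  · rw [Real.sqrt_eq_zero'.2 ha, zero_mul]

theorem Real.sqrt_mul_self_sub_sqrt_neg_mul_self (a : ℝ) : √a * √a - √(-a) * √(-a) = a := by
  rcases le_total 0 a with ha | ha
  · rw [Real.sqrt_eq_zero'.2 (neg_nonpos.2 ha), Real.mul_self_sqrt ha]; ring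
  · rw [Real.sqrt_eq_zero'.2 ha, Real.mul_self_sqrt (neg_nonneg.2 ha)]; ring

section SelfCommutator

variable {A B : Type*} [NormedRing A] [StarRing A] [NormedRing B] [StarRing B]

def IsSumOfSquareZeroSelfCommutators (r : ℝ) (a : A) : Prop :=
  ∃ x₁ x₂ : A, x₁ * x₁ = 0 ∧ x₂ * x₂ = 0 ∧ ‖x₁‖ ≤ r ∧ ‖x₂‖ ≤ r ∧
    Commute (star x₁ * x₁ - x₁ * star x₁) (star x₂ * x₂ - x₂ * star x₂) ∧
    a = (star x₁ * x₁ - x₁ * star x₁) + (star x₂ * x₂ - x₂ * star x₂)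

theorem IsSumOfSquareZeroSelfCommutators.map {F : Type*} [FunLike F A B] [RingHomClass F A B]
    [StarHomClass F A B] (φ : F) (hφ : ∀ x, ‖φ x‖ = ‖x‖) {r : ℝ} {a : A}
    (ha : IsSumOfSquareZeroSelfCommutators r a) : IsSumOfSquareZeroSelfCommutators r (φ a) := by
  obtain ⟨x₁, x₂, h₁, h₂, hn₁, hn₂, hc, rfl⟩ := ha
  have hφc : ∀ x, φ (star x * x - x * star x) = star (φ x) * φ x - φ x * star (φ x) := by
    simp only [map_sub, map_mul, map_star, implies_true]
  refine ⟨φ x₁, φ x₂, by rw [← map_mul, h₁, map_zero], by rw [← map_mul, h₂, map_zero],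
    (hφ x₁).trans_le hn₁, (hφ x₂).trans_le hn₂, ?_, ?_⟩
  · simpa only [hφc] using hc.map φ
  · rw [map_add, hφc, hφc]

theorem Unitary.norm_conjStarAlgAut [CStarRing A] {S : Type*} [SMul S A] [IsScalarTower S A A]
    [SMulCommClass S A A] (u : unitary A) (x : A) : ‖Unitary.conjStarAlgAut S A u x‖ = ‖x‖ := by
  rw [Unitary.conjStarAlgAut_apply, ← Unitary.coe_star, CStarRing.norm_mul_coe_unitary,
    CStarRing.norm_coe_unitary_mul]

end SelfCommutator

def restrictToFin (f : ℕ → ℕ) (n : ℕ) (k : Fin n) : Fin n :=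
  if h : f k < n then ⟨f k, h⟩ else k

theorem involutive_restrictToFin {f : ℕ → ℕ} (hf : Involutive f) (n : ℕ) :
    Involutive (restrictToFin f n) := by
  intro k
  by_cases h : f k < n
  · simp [restrictToFin, h, hf k]
  · simp [restrictToFin, h]

def pairWeight (f : ℕ → ℕ) (t : ℕ → ℝ) (k : ℕ) : ℝ :=
  if k < f k then t (f k) else -t k

theorem pairWeight_restrictToFin {f : ℕ → ℕ} (hf : Involutive f) {t : ℕ → ℝ} {n : ℕ}
    (hfix : ∀ k, f k = k → t k = 0) (hout : ∀ m, n ≤ m → t m = 0) (k : Fin n) :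
    pairWeight f t (restrictToFin f n k) = -pairWeight f t k := by
  unfold restrictToFin pairWeight
  by_cases h : f k < n
  · rw [dif_pos h]
    simp only [hf k]
    rcases lt_trichotomy (k : ℕ) (f k) with hlt | heq | hgt
    · simp [hlt, hlt.not_gt]
    · simp [← heq, hfix k heq.symm]
    · simp [hgt, hgt.not_gt]
  · rw [dif_neg h, if_pos (k.2.trans_le (not_lt.1 h)), hout _ (not_lt.1 h), neg_zero]

def evenPairing (k : ℕ) : ℕ := if k % 2 = 0 then k + 1 else k - 1

-- Fixes `0`, by truncated subtraction.
def oddPairing (k : ℕ) : ℕ := if k % 2 = 0 then k - 1 else k + 1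

theorem involutive_evenPairing : Involutive evenPairing := by
  intro k
  unfold evenPairing
  split_ifs <;> omega

theorem involutive_oddPairing : Involutive oddPairing := by
  intro k
  unfold oddPairing
  split_ifs <;> omega

theorem pairWeight_evenPairing_add_oddPairing (t : ℕ → ℝ) (k : ℕ) :
    pairWeight evenPairing t k + pairWeight oddPairing t k = t (k + 1) - t k := by
  unfold pairWeight evenPairing oddPairing
  split_ifs <;> first | omega | ring


theorem exists_mem_abs_add_le {α : Type*} {f : α → ℝ} {l : List α} (hl : l ≠ []) {s M : ℝ}
    (hf : ∀ a ∈ l, |f a| ≤ M) (hs : |s| ≤ M) (hsum : s + (l.map f).sum = 0) :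
    ∃ a ∈ l, |s + f a| ≤ M := by
  rcases le_total s 0 with hs0 | hs0
  · obtain ⟨a, ha, hfa⟩ := List.exists_le_of_sum_le hl (fun _ => (0 : ℝ)) f (by simp; linarith)
    exact ⟨a, ha, abs_le.2 ⟨by linarith [(abs_le.1 hs).1], by linarith [(abs_le.1 (hf a ha)).2]⟩⟩
  · obtain ⟨a, ha, hfa⟩ := List.exists_le_of_sum_le hl f (fun _ => (0 : ℝ)) (by simp; linarith)
    exact ⟨a, ha, abs_le.2 ⟨by linarith [(abs_le.1 (hf a ha)).1], by linarith [(abs_le.1 hs).2]⟩⟩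

theorem exists_perm_abs_add_sum_take_le {α : Type*} [DecidableEq α] (f : α → ℝ) {M : ℝ}
    (l : List α) {s : ℝ} (hf : ∀ a ∈ l, |f a| ≤ M) (hs : |s| ≤ M)
    (hsum : s + (l.map f).sum = 0) :
    ∃ l' : List α, l'.Perm l ∧ ∀ m, |s + ((l'.map f).take m).sum| ≤ M := by
  rcases eq_or_ne l [] with rfl | hl
  · exact ⟨[], List.Perm.nil, fun m => by simpa using hs⟩
  obtain ⟨a, ha, has⟩ := exists_mem_abs_add_le hl hf hs hsum
  have hperm : l.Perm (a :: l.erase a) := List.perm_cons_erase ha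
  have hsum' : (s + f a) + ((l.erase a).map f).sum = 0 := by
    have := (hperm.map f).sum_eq
    simp only [List.map_cons, List.sum_cons] at this
    linarith
  obtain ⟨l', hl', hl'M⟩ := exists_perm_abs_add_sum_take_le f (l.erase a)
    (fun b hb => hf b (List.mem_of_mem_erase hb)) has hsum'
  refine ⟨a :: l', (hl'.cons a).trans hperm.symm, fun m => ?_⟩
  cases m with
  | zero => simpa using hs
  | succ m => simpa [add_assoc] using hl'M m
termination_by l.length
decreasing_by
  have := List.length_erase_of_mem ha
  have := List.length_pos_iff.2 hl
  omega

section DiagonalMatrices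

variable {ι : Type*} [Fintype ι] [DecidableEq ι]

theorem exists_mul_self_eq_zero_selfCommutator_eq_diagonal (p : Equiv.Perm ι) {v : ι → ℝ}
    (hv : ∀ i, v (p i) = -v i) {M : ℝ} (hvM : ∀ i, |v i| ≤ M) :
    ∃ x : Matrix ι ι ℂ, x * x = 0 ∧ ‖x‖ ≤ √M ∧
      star x * x - x * star x = diagonal fun i => (v i : ℂ) := by
  set P : Matrix ι ι ℂ := p.permMatrix ℂ
  -- `√` vanishes on negative reals, so `D` only keeps the positive part of `v`
  set D : Matrix ι ι ℂ := diagonal fun i => (√(v i) : ℂ)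
  have hPX : ∀ X : Matrix ι ι ℂ, P * X = X.submatrix p id := PEquiv.toMatrix_toPEquiv_mul p
  have hXP : ∀ X : Matrix ι ι ℂ, X * star P = X.submatrix id p := fun X => by
    rw [star_eq_conjTranspose, conjTranspose_permMatrix]
    exact PEquiv.mul_toMatrix_toPEquiv X p⁻¹
  have hPP : star P * P = 1 := by
    rw [star_eq_conjTranspose, conjTranspose_permMatrix, ← permMatrix_mul, mul_inv_cancel,
      permMatrix_one]
  have hD : star D = D := by
    simp [D, star_eq_conjTranspose, diagonal_conjTranspose]
  have hDD : D * D = diagonal fun i => ((√(v i) * √(v i) : ℝ) : ℂ) := by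
    simp [D, diagonal_mul_diagonal]
  refine ⟨P * D, ?_, ?_, ?_⟩
  · ext i j
    simp only [hPX, D, mul_apply, submatrix_apply, diagonal_apply, id, mul_ite, ite_mul,
      mul_zero, zero_mul]
    refine Finset.sum_eq_zero fun k _ => ?_
    split_ifs with hk hik
    · subst hik
      rw [hv (p i), ← Complex.ofReal_mul, Real.sqrt_mul_sqrt_neg, Complex.ofReal_zero]
    all_goals rfl
  · calc ‖P * D‖ ≤ ‖P‖ * ‖D‖ := norm_mul_le _ _
      _ ≤ 1 * √M := by
        gcongr
        · exact permMatrix_l2_opNorm_le p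
        · rw [l2_opNorm_diagonal]
          refine pi_norm_le_iff_of_nonneg (Real.sqrt_nonneg M) |>.2 fun i => ?_
          rw [Complex.norm_real, Real.norm_of_nonneg (Real.sqrt_nonneg _)]
          exact Real.sqrt_le_sqrt ((le_abs_self _).trans (hvM i))
      _ = √M := one_mul _
  · have h1 : star (P * D) * (P * D) = D * D := by
      rw [star_mul, hD, mul_assoc, ← mul_assoc (star P), hPP, one_mul]
    have h2 : P * D * star (P * D) = (D * D).submatrix p p := by
      rw [star_mul, hD, ← mul_assoc, mul_assoc P, hPX, hXP]; rfl
    rw [h1, h2, hDD, submatrix_diagonal_equiv, diagonal_sub]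
    congr 1
    funext i
    simp only [Function.comp_apply, hv]
    exact_mod_cast Real.sqrt_mul_self_sub_sqrt_neg_mul_self (v i)

theorem isSumOfSquareZeroSelfCommutators_diagonal_of_partialSums {n : ℕ} (e : Fin n ≃ ι)
    {d : ι → ℝ} {t : ℕ → ℝ} {M : ℝ} (ht₀ : t 0 = 0) (htn : ∀ m, n ≤ m → t m = 0)
    (htM : ∀ m, |t m| ≤ M) (hd : ∀ k : Fin n, d (e k) = t (k + 1) - t k) :
    IsSumOfSquareZeroSelfCommutators (√M) (diagonal fun i => (d i : ℂ)) := by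
  have hpair : ∀ f, Involutive f → (∀ k, f k = k → t k = 0) →
      ∃ x : Matrix ι ι ℂ, x * x = 0 ∧ ‖x‖ ≤ √M ∧
        star x * x - x * star x = diagonal fun i => (pairWeight f t (e.symm i) : ℂ) :=
    fun f hf hfix => exists_mul_self_eq_zero_selfCommutator_eq_diagonal
      (e.permCongr (involutive_restrictToFin hf n).toPerm)
      (fun i => by simpa using pairWeight_restrictToFin hf hfix htn (e.symm i))
      (fun i => by unfold pairWeight; split_ifs <;> simp [htM])
  obtain ⟨x₁, h₁, hn₁, hc₁⟩ := hpair evenPairing involutive_evenPairing fun k hk => by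
    unfold evenPairing at hk; split_ifs at hk <;> omega
  obtain ⟨x₂, h₂, hn₂, hc₂⟩ := hpair oddPairing involutive_oddPairing fun k hk => by
    obtain rfl : k = 0 := by unfold oddPairing at hk; split_ifs at hk <;> omega
    exact ht₀
  refine ⟨x₁, x₂, h₁, h₂, hn₁, hn₂, hc₁ ▸ hc₂ ▸ commute_diagonal _ _, ?_⟩
  rw [hc₁, hc₂, diagonal_add]
  congr 1
  funext i
  obtain ⟨k, rfl⟩ := e.surjective i
  rw [hd, e.symm_apply_apply, ← Complex.ofReal_add, pairWeight_evenPairing_add_oddPairing]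

theorem isSumOfSquareZeroSelfCommutators_diagonal {d : ι → ℝ} (hd : ∑ i, d i = 0) {M : ℝ}
    (hM : 0 ≤ M) (hdM : ∀ i, |d i| ≤ M) :
    IsSumOfSquareZeroSelfCommutators (√M) (diagonal fun i => (d i : ℂ)) := by
  obtain ⟨l, hl, hlM⟩ := exists_perm_abs_add_sum_take_le d Finset.univ.toList (s := 0)
    (fun i _ => hdM i) (by simpa using hM) (by simpa [Finset.sum_map_toList] using hd)
  have hsum : (l.map d).sum = 0 := by
    rw [(hl.map d).sum_eq, Finset.sum_map_toList, hd]
  refine isSumOfSquareZeroSelfCommutators_diagonal_of_partialSums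
    ((hl.nodup_iff.2 (Finset.nodup_toList _)).getEquivOfForallMemList l
      fun i => hl.mem_iff.2 (Finset.mem_toList.2 (Finset.mem_univ i)))
    (t := fun m => ((l.map d).take m).sum) (by simp) (fun m hm => ?_)
    (fun m => by simpa using hlM m) fun k => ?_
  · rw [List.take_of_length_le (by simpa using hm), hsum]
  · simp [List.sum_take_succ _ _ (by simp : (k : ℕ) < (l.map d).length)]

end DiagonalMatrices

theorem stmt_7_general (n : ℕ) (h : Matrix (Fin n) (Fin n) ℂ)
    (hsa : IsSelfAdjoint h) (htr : h.trace = 0) :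
    ∃ x₁ x₂ : Matrix (Fin n) (Fin n) ℂ,
      x₁ * x₁ = 0 ∧ x₂ * x₂ = 0 ∧
      ‖x₁‖ ≤ Real.sqrt ‖h‖ ∧ ‖x₂‖ ≤ Real.sqrt ‖h‖ ∧
      (star x₁ * x₁ - x₁ * star x₁) * (star x₂ * x₂ - x₂ * star x₂) =
        (star x₂ * x₂ - x₂ * star x₂) * (star x₁ * x₁ - x₁ * star x₁) ∧
      h = (star x₁ * x₁ - x₁ * star x₁) + (star x₂ * x₂ - x₂ * star x₂) := by
  have hH : h.IsHermitian := hsa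
  set φ := Unitary.conjStarAlgAut ℂ _ hH.eigenvectorUnitary
  have hspec : h = φ (diagonal fun i => (hH.eigenvalues i : ℂ)) := hH.spectral_theorem
  have hsum : ∑ i, hH.eigenvalues i = 0 := by
    have := hH.trace_eq_sum_eigenvalues
    rwa [htr, eq_comm, ← RCLike.ofReal_sum, RCLike.ofReal_eq_zero] at this
  have hle : ∀ i, |hH.eigenvalues i| ≤ ‖h‖ := fun i => by
    rw [congrArg norm hspec, Unitary.norm_conjStarAlgAut, l2_opNorm_diagonal]
    simpa using norm_le_pi_norm (fun i => (hH.eigenvalues i : ℂ)) i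
  obtain ⟨x₁, x₂, h₁, h₂, hn₁, hn₂, hc, hx⟩ :=
    (isSumOfSquareZeroSelfCommutators_diagonal hsum (norm_nonneg h) hle).map φ
      (Unitary.norm_conjStarAlgAut _)
  exact ⟨x₁, x₂, h₁, h₂, hn₁, hn₂, hc, hspec.trans hx⟩

/-- Lemma 3.1 (matrix case): a trace-zero selfadjoint matrix is a sum of two commuting
self-commutators `[xᵢ*, xᵢ]` with `xᵢ² = 0` and `‖xᵢ‖ ≤ ‖h‖^{1/2}` (operator norms). -/
theorem stmt_7 (n : ℕ) (hn : 1 ≤ n) (h : Matrix (Fin n) (Fin n) ℂ)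
    (hsa : IsSelfAdjoint h) (htr : h.trace = 0) :
    ∃ x₁ x₂ : Matrix (Fin n) (Fin n) ℂ,
      x₁ * x₁ = 0 ∧ x₂ * x₂ = 0 ∧
      ‖x₁‖ ≤ Real.sqrt ‖h‖ ∧ ‖x₂‖ ≤ Real.sqrt ‖h‖ ∧
      (star x₁ * x₁ - x₁ * star x₁) * (star x₂ * x₂ - x₂ * star x₂) =
        (star x₂ * x₂ - x₂ * star x₂) * (star x₁ * x₁ - x₁ * star x₁) ∧
      h = (star x₁ * x₁ - x₁ * star x₁) + (star x₂ * x₂ - x₂ * star x₂) :=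
  stmt_7_general n h hsa htr
end

section
/- Let λ₁, …, λₙ be real numbers with λ₁ + ⋯ + λₙ = 0. Then there exists a permutation σ of {1, …, n} such that for every k with 1 ≤ k ≤ n one has |∑_{i=1}^{k} λ_{σ(i)}| ≤ max_{1 ≤ i ≤ k} |λ_{σ(i)}|. -/
/-!
Greedy ordering: if the running sum `s` of the terms placed so far is nonzero, the remaining
terms sum to `-s`, so one of them, `x`, satisfies `s * x ≤ 0`; placing it next gives
`|s + x| ≤ max |s| |x|`. Carrying the running sum as an offset makes this an induction on the
number of terms.
-/

open Finset

namespace Fin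

variable {n : ℕ}

theorem Iic_succ_eq_cons (m : Fin n) :
    Iic m.succ = ((Iic m).map (succEmb n)).cons 0 (by simp) := by
  ext x
  cases x using Fin.cases <;> simp [succ_le_succ_iff]

theorem sum_Iic_succ {M : Type*} [AddCommMonoid M] (f : Fin (n + 1) → M) (m : Fin n) :
    ∑ i ∈ Iic m.succ, f i = f 0 + ∑ i ∈ Iic m, f i.succ := by
  rw [Iic_succ_eq_cons, Finset.sum_cons, sum_map]
  rfl

theorem sup'_Iic_succ {α : Type*} [SemilatticeSup α] (f : Fin (n + 1) → α) (m : Fin n) :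
    (Iic m.succ).sup' nonempty_Iic f = f 0 ⊔ (Iic m).sup' nonempty_Iic (fun i => f i.succ) := by
  rw [sup'_congr nonempty_Iic (Iic_succ_eq_cons m) fun _ _ => rfl, sup'_cons nonempty_Iic.map,
    sup'_map]
  rfl

end Fin

section

variable {α : Type*} [CommRing α] [LinearOrder α] [IsStrictOrderedRing α]

theorem abs_add_le_max_abs_of_mul_nonpos {a b : α} (h : a * b ≤ 0) :
    |a + b| ≤ max |a| |b| := by
  have := le_max_left |a| |b|
  have := le_max_right |a| |b|
  rw [abs_le]
  rcases mul_nonpos_iff.1 h with ⟨ha, hb⟩ | ⟨ha, hb⟩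
  · rw [abs_of_nonneg ha, abs_of_nonpos hb] at *
    constructor <;> linarith
  · rw [abs_of_nonpos ha, abs_of_nonneg hb] at *
    constructor <;> linarith

theorem exists_mul_nonpos_of_add_sum_eq_zero {ι : Type*} [Fintype ι] [Nonempty ι] {s : α}
    {f : ι → α} (h : s + ∑ i, f i = 0) : ∃ i, s * f i ≤ 0 := by
  have hsum : ∑ i, s * f i ≤ ∑ _i : ι, (0 : α) := by
    rw [← mul_sum, sum_const_zero, eq_neg_of_add_eq_zero_right h]
    nlinarith [sq_nonneg s]
  simpa using exists_le_of_sum_le univ_nonempty hsum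

def PartialSumsAbsLeMax {n : ℕ} (s : α) (f : Fin n → α) : Prop :=
  ∀ k, |s + ∑ i ∈ Iic k, f i| ≤ max |s| ((Iic k).sup' nonempty_Iic fun i => |f i|)

theorem PartialSumsAbsLeMax.cons {n : ℕ} {s x : α} {f : Fin n → α} (hx : s * x ≤ 0)
    (hf : PartialSumsAbsLeMax (s + x) f) :
    PartialSumsAbsLeMax s (Fin.cons x f : Fin (n + 1) → α) := by
  have hsx := abs_add_le_max_abs_of_mul_nonpos hx
  intro k
  cases k using Fin.cases with
  | zero => simpa [show Iic (0 : Fin (n + 1)) = {0} from Iic_bot] using hsx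
  | succ m =>
    rw [Fin.sum_Iic_succ, Fin.sup'_Iic_succ]
    simp only [Fin.cons_zero, Fin.cons_succ]
    calc |s + (x + ∑ i ∈ Iic m, f i)| = |s + x + ∑ i ∈ Iic m, f i| := by rw [add_assoc]
      _ ≤ max |s + x| ((Iic m).sup' nonempty_Iic fun i => |f i|) := hf m
      _ ≤ max (max |s| |x|) ((Iic m).sup' nonempty_Iic fun i => |f i|) := max_le_max_right _ hsx
      _ = _ := max_assoc _ _ _

theorem exists_perm_partialSumsAbsLeMax {n : ℕ} (s : α) (f : Fin n → α)
    (h : s + ∑ i, f i = 0) :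
    ∃ σ : Equiv.Perm (Fin n), PartialSumsAbsLeMax s (f ∘ σ) := by
  induction n generalizing s with
  | zero => exact ⟨1, fun k => k.elim0⟩
  | succ n ih =>
    obtain ⟨j, hj⟩ := exists_mul_nonpos_of_add_sum_eq_zero h
    set f' : Fin n → α := fun i => f (Equiv.swap 0 j i.succ)
    have hf' : s + f j + ∑ i, f' i = 0 := by
      have hswap := Equiv.sum_comp (Equiv.swap 0 j) f
      rw [Fin.sum_univ_succ, Equiv.swap_apply_left] at hswap
      rw [add_assoc, hswap, h]
    obtain ⟨σ', hσ'⟩ := ih (s + f j) f' hf'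
    refine ⟨Equiv.Perm.decomposeFin.symm (j, σ'), ?_⟩
    have hcons : f ∘ Equiv.Perm.decomposeFin.symm (j, σ') = Fin.cons (f j) (f' ∘ σ') := by
      ext i
      cases i using Fin.cases <;> simp [f', Equiv.Perm.decomposeFin_symm_apply_succ]
    rw [hcons]
    exact hσ'.cons hj

end

/-- Rearrangement lemma: real numbers summing to zero can be permuted so that every
partial sum is bounded by the maximum modulus of the terms appearing in it. -/
theorem stmt_8 (n : ℕ) (lam : Fin n → ℝ) (hsum : ∑ i, lam i = 0) :
    ∃ σ : Equiv.Perm (Fin n), ∀ k : Fin n,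
      |∑ i ∈ Finset.Iic k, lam (σ i)| ≤
        (Finset.Iic k).sup' Finset.nonempty_Iic (fun i => |lam (σ i)|) := by
  obtain ⟨σ, hσ⟩ := exists_perm_partialSumsAbsLeMax 0 lam (by rwa [zero_add])
  refine ⟨σ, fun k => ?_⟩
  have hnonneg : 0 ≤ (Iic k).sup' nonempty_Iic fun i => |lam (σ i)| :=
    le_sup'_of_le _ (mem_Iic.2 le_rfl) (abs_nonneg _)
  have hk := hσ k
  simp only [Function.comp_apply, zero_add, abs_zero] at hk
  rwa [max_eq_right hnonneg] at hk
end

section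
/- Let G be a group, let k ≥ 1 and m ≥ 0, and let a_{j,l} ∈ G for 1 ≤ j ≤ k and 0 ≤ l ≤ m. Set N = ⌊(m+1)/2⌋ · (k−1). Then there exist u₁, v₁, …, u_N, v_N ∈ G such that ∏_{j=1}^{k} ∏_{l=0}^{m} a_{j,l} = P₀ P₁ ⋯ P_m · ∏_{i=1}^{N} u_i v_i u_i⁻¹ v_i⁻¹, where for even l the factor P_l is the forward product a_{1,l} a_{2,l} ⋯ a_{k,l} and for odd l the factor P_l is the reversed product a_{k,l} a_{k−1,l} ⋯ a_{1,l}. -/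
/-!
Peeling off the first row, the column product `P_l` of rows `1, …, k` is `a_{1,l} P'_l` for even
`l` and `P'_l a_{1,l}` for odd `l`, where `P'_l` is the column product of rows `2, …, k`. So it
suffices to merge two rows: `(f₀ f₁ f₂ ⋯)(g₀ g₁ g₂ ⋯)` becomes `(f₀g₀)(g₁f₁)(f₂g₂) ⋯` at the cost
of one commutator per pair of columns, by `p q Y = q p Y ⁅Y⁻¹p⁻¹Y, Y⁻¹q⁻¹Y⁆` with `p = f₁ f₂ ⋯`,
`q = g₀ g₁` and `Y = g₂ g₃ ⋯`. The commutators collected along the way stay on the right, so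
they are counted in `commutatorSet G ^ N`.
-/

open Pointwise commutatorElement

namespace ColumnProduct

variable {G : Type*} [Group G]

def twistMul (l : ℕ) (x y : G) : G := if Even l then x * y else y * x

def columnProd {k n : ℕ} (a : Fin k → Fin n → G) (l : Fin n) : G :=
  if Even (l : ℕ) then (List.ofFn fun j => a j l).prod
  else ((List.ofFn fun j => a j l).reverse).prod

theorem columnProd_succ {k n : ℕ} (a : Fin (k + 1) → Fin n → G) :
    columnProd a = fun l : Fin n => twistMul l (a 0 l) (columnProd (fun j => a j.succ) l) := by
  ext l
  by_cases hl : Even (l : ℕ) <;> simp [columnProd, twistMul, hl, List.ofFn_succ]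

theorem twistMul_add_two (l : ℕ) (x y : G) : twistMul (l + 2) x y = twistMul l x y := by
  simp [twistMul, Nat.even_add]

theorem exists_commutator_swap_pair (a a' b b' X Y c : G) :
    ∃ d ∈ commutatorSet G,
      a * (a' * X) * (b * (b' * Y)) = a * b * (b' * a' * (X * Y * c⁻¹)) * (c * d) :=
  ⟨⁅Y⁻¹ * (a' * X)⁻¹ * Y, Y⁻¹ * (b * b')⁻¹ * Y⁆, commutator_mem_commutatorSet _ _, by
    rw [commutatorElement_def]; group⟩

theorem exists_prod_mul_prod_eq_twistMul_mul : ∀ (n : ℕ) (f g : Fin n → G),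
    ∃ c ∈ commutatorSet G ^ (n / 2),
      (List.ofFn f).prod * (List.ofFn g).prod =
        (List.ofFn fun l => twistMul l (f l) (g l)).prod * c
  | 0, f, g => ⟨1, by simp⟩
  | 1, f, g => ⟨1, by simp [twistMul]⟩
  | n + 2, f, g => by
    obtain ⟨c, hc, hfg⟩ := exists_prod_mul_prod_eq_twistMul_mul n
      (fun i => f i.succ.succ) (fun i => g i.succ.succ)
    obtain ⟨d, hd, hswap⟩ := exists_commutator_swap_pair (f 0) (f 1) (g 0) (g 1)
      (List.ofFn fun i => f i.succ.succ).prod (List.ofFn fun i => g i.succ.succ).prod c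
    refine ⟨c * d, ?_, ?_⟩
    · rw [show (n + 2) / 2 = n / 2 + 1 by omega, pow_succ]
      exact Set.mul_mem_mul hc hd
    · simp only [List.ofFn_succ, List.prod_cons, Fin.val_succ, twistMul_add_two,
        eq_mul_inv_of_mul_eq hfg.symm]
      simpa [twistMul] using hswap

theorem exists_rowProd_eq_columnProd_mul (n : ℕ) : ∀ (k : ℕ) (a : Fin (k + 1) → Fin n → G),
    ∃ c ∈ commutatorSet G ^ (n / 2 * k),
      (List.ofFn fun j => (List.ofFn (a j)).prod).prod = (List.ofFn (columnProd a)).prod * c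
  | 0, a => ⟨1, by rw [columnProd_succ]; simp [columnProd, twistMul]⟩
  | k + 1, a => by
    obtain ⟨c, hc, hrest⟩ := exists_rowProd_eq_columnProd_mul n k fun j => a j.succ
    obtain ⟨d, hd, hmerge⟩ :=
      exists_prod_mul_prod_eq_twistMul_mul n (a 0) (columnProd fun j => a j.succ)
    refine ⟨d * c, ?_, ?_⟩
    · rw [Nat.mul_succ, add_comm, pow_add]
      exact Set.mul_mem_mul hd hc
    · rw [List.ofFn_succ, List.prod_cons, hrest, ← mul_assoc, hmerge, mul_assoc,
        columnProd_succ a]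

theorem exists_commutators_of_mem_commutatorSet_pow {N : ℕ} {c : G}
    (hc : c ∈ commutatorSet G ^ N) :
    ∃ u v : Fin N → G, (List.ofFn fun i => ⁅u i, v i⁆).prod = c := by
  obtain ⟨f, rfl⟩ := Set.mem_pow.mp hc
  choose u v huv using fun i => mem_commutatorSet_iff.mp (f i).2
  exact ⟨u, v, by simp only [huv]⟩

end ColumnProduct

open ColumnProduct in
theorem stmt_10_general {G : Type*} [Group G] (k m : ℕ)
    (a : Fin k → Fin (m + 1) → G) :
    ∃ u v : Fin ((m + 1) / 2 * (k - 1)) → G,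
      (List.ofFn fun j => (List.ofFn fun l => a j l).prod).prod =
        (List.ofFn fun l : Fin (m + 1) =>
            if Even (l : ℕ) then (List.ofFn fun j => a j l).prod
            else ((List.ofFn fun j => a j l).reverse).prod).prod *
          (List.ofFn fun i => u i * v i * (u i)⁻¹ * (v i)⁻¹).prod := by
  cases k with
  | zero => exact ⟨Fin.elim0, Fin.elim0, by simp⟩
  | succ k =>
    obtain ⟨c, hc, hprod⟩ := exists_rowProd_eq_columnProd_mul (m + 1) k a
    obtain ⟨u, v, rfl⟩ := exists_commutators_of_mem_commutatorSet_pow hc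
    exact ⟨u, v, hprod⟩

/-- Extension of Lemma 3.5: a product `∏_{j=1}^{k} ∏_{l=0}^{m} a_{j,l}` equals the product
of the column products `P₀ P₁ ⋯ P_m` (forward for even `l`, reversed for odd `l`) times
`⌊(m+1)/2⌋ (k-1)` multiplicative commutators. -/
theorem stmt_10 {G : Type*} [Group G] (k m : ℕ) (hk : 1 ≤ k)
    (a : Fin k → Fin (m + 1) → G) :
    ∃ u v : Fin ((m + 1) / 2 * (k - 1)) → G,
      (List.ofFn fun j => (List.ofFn fun l => a j l).prod).prod =
        (List.ofFn fun l : Fin (m + 1) =>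
            if Even (l : ℕ) then (List.ofFn fun j => a j l).prod
            else ((List.ofFn fun j => a j l).reverse).prod).prod *
          (List.ofFn fun i => u i * v i * (u i)⁻¹ * (v i)⁻¹).prod :=
  stmt_10_general k m a
end

section
/- Let F be a finite-dimensional C*-algebra and let h ∈ F be selfadjoint. Then there exist selfadjoint q, r ∈ F such that h = q + r, q lies in the linear span of the commutators {xy − yx : x, y ∈ F}, r lies in the center of F, ‖q‖ ≤ 2‖h‖, and ‖r‖ ≤ ‖h‖. -/
/-!
Average the unitary conjugates `u * h * star u` against the Haar probability measure of the unitary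
group, which is compact in finite dimension. The average `r` is selfadjoint, has norm at most `‖h‖`
(conjugation by a unitary is isometric) and is invariant under unitary conjugation, hence commutes
with every unitary and so, since unitaries span a C⋆-algebra, is central. Each `h - u * h * star u`
is the commutator of `star u` and `u * h`, and the span of commutators is closed in finite
dimension, so `q = h - r` lies in it, with `‖q‖ ≤ ‖h‖ + ‖r‖ ≤ 2‖h‖`.
-/

open MeasureTheory

section CStarRing

variable {A : Type*} [NormedRing A] [StarRing A] [CStarRing A]

lemma CStarRing.norm_unitary_conj (u : unitary A) (a : A) :
    ‖(u : A) * a * star (u : A)‖ = ‖a‖ := by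
  rw [mul_assoc, CStarRing.norm_coe_unitary_mul, ← Unitary.coe_star,
    CStarRing.norm_mul_coe_unitary]

lemma isCompact_unitary [ProperSpace A] : IsCompact (unitary A : Set A) :=
  Metric.isCompact_of_isClosed_isBounded isClosed_unitary <|
    (Metric.isBounded_closedBall (x := 0) (r := ‖(1 : A)‖)).subset fun u hu => by
      simpa using (CStarRing.norm_coe_unitary_mul ⟨u, hu⟩ 1).le

end CStarRing

lemma CStarAlgebra.mem_center_of_forall_commute_unitary {A : Type*} [CStarAlgebra A] {r : A}
    (hr : ∀ u : unitary A, Commute (u : A) r) : r ∈ Set.center A := by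
  have hspan : Submodule.span ℂ (unitary A : Set A) ≤
      Subalgebra.toSubmodule (Subalgebra.centralizer ℂ {r}) :=
    Submodule.span_le.mpr fun u hu => by
      simpa [Set.mem_centralizer_iff] using (hr ⟨u, hu⟩).eq.symm
  rw [CStarAlgebra.span_unitary, top_le_iff] at hspan
  refine Semigroup.mem_center_iff.mpr fun g => ?_
  have hg : g ∈ Subalgebra.centralizer ℂ {r} := by
    simp [← Subalgebra.mem_toSubmodule, hspan]
  exact (Subalgebra.mem_centralizer_iff ℂ |>.mp hg r rfl).symm

section UnitaryAverage

variable {A : Type*} [CStarAlgebra A] [MeasurableSpace (unitary A)]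

noncomputable def unitaryAverage (μ : Measure (unitary A)) (a : A) : A :=
  ∫ u, (u : A) * a * star (u : A) ∂μ

variable {μ : Measure (unitary A)}

lemma isSelfAdjoint_unitaryAverage {a : A} (ha : IsSelfAdjoint a) :
    IsSelfAdjoint (unitaryAverage μ a) := by
  rw [IsSelfAdjoint, unitaryAverage, ← starL'_apply ℝ, ← ContinuousLinearEquiv.integral_comp_comm]
  simp [mul_assoc, ha.star_eq]

lemma norm_unitaryAverage_le [IsProbabilityMeasure μ] (a : A) : ‖unitaryAverage μ a‖ ≤ ‖a‖ := by
  simpa [unitaryAverage] using norm_integral_le_of_norm_le_const (μ := μ)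
    (.of_forall fun u => (CStarRing.norm_unitary_conj u a).le)

variable [BorelSpace (unitary A)] [SecondCountableTopology A]

lemma integrable_unitary_conj [IsFiniteMeasure μ] (a : A) :
    Integrable (fun u : unitary A => (u : A) * a * star (u : A)) μ :=
  .of_bound (by fun_prop) ‖a‖ (.of_forall fun u => (CStarRing.norm_unitary_conj u a).le)

lemma unitary_conj_unitaryAverage [IsFiniteMeasure μ] [μ.IsMulLeftInvariant] (v : unitary A)
    (a : A) : (v : A) * unitaryAverage μ a * star (v : A) = unitaryAverage μ a := by
  have hint := integrable_unitary_conj (μ := μ) a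
  calc (v : A) * unitaryAverage μ a * star (v : A)
      = ∫ u, (v : A) * ((u : A) * a * star (u : A)) * star (v : A) ∂μ := by
        rw [unitaryAverage, integral_mul_const_of_integrable (hint.const_mul _),
          integral_const_mul_of_integrable hint]
    _ = ∫ u, ((v * u : unitary A) : A) * a * star ((v * u : unitary A) : A) ∂μ := by
        simp only [MulMemClass.coe_mul, star_mul, mul_assoc]
    _ = unitaryAverage μ a :=
        integral_mul_left_eq_self (fun u : unitary A => (u : A) * a * star (u : A)) v

lemma commute_unitaryAverage [IsFiniteMeasure μ] [μ.IsMulLeftInvariant] (v : unitary A)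
    (a : A) : Commute (v : A) (unitaryAverage μ a) :=
  calc (v : A) * unitaryAverage μ a
      = (v : A) * unitaryAverage μ a * star (v : A) * v := by
        rw [mul_assoc _ (star _), Unitary.coe_star_mul_self, mul_one]
    _ = unitaryAverage μ a * v := by rw [unitary_conj_unitaryAverage]

lemma unitaryAverage_mem_center [IsFiniteMeasure μ] [μ.IsMulLeftInvariant] (a : A) :
    unitaryAverage μ a ∈ Set.center A :=
  CStarAlgebra.mem_center_of_forall_commute_unitary fun v => commute_unitaryAverage v a

lemma sub_unitaryAverage_mem_span_commutators [FiniteDimensional ℂ A] [IsProbabilityMeasure μ]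
    (a : A) :
    a - unitaryAverage μ a ∈ Submodule.span ℂ {z : A | ∃ x y : A, z = x * y - y * x} := by
  set W := Submodule.span ℂ {z : A | ∃ x y : A, z = x * y - y * x}
  have hint := integrable_unitary_conj (μ := μ) a
  have hconj : ∀ u : unitary A, a - (u : A) * a * star (u : A) ∈ W := fun u =>
    Submodule.subset_span ⟨star (u : A), u * a, by
      rw [← mul_assoc, Unitary.coe_star_mul_self, one_mul]⟩
  have hsub : a - unitaryAverage μ a = ∫ u, (a - (u : A) * a * star (u : A)) ∂μ := by
    rw [integral_sub (integrable_const a) hint, integral_const, probReal_univ, one_smul,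
      unitaryAverage]
  rw [hsub]
  exact Convex.integral_mem (W.restrictScalars ℝ).convex W.closed_of_finiteDimensional
    (.of_forall hconj) ((integrable_const a).sub hint)

end UnitaryAverage

/-- Lemma 3.4: in a finite-dimensional C*-algebra, every selfadjoint `h` decomposes as
`h = q + r` with `q` a sum of commutators, `r` central, `‖q‖ ≤ 2‖h‖` and `‖r‖ ≤ ‖h‖`. -/
theorem stmt_11 {F : Type*} [NormedRing F] [StarRing F] [CStarRing F]
    [NormedAlgebra ℂ F] [StarModule ℂ F] [FiniteDimensional ℂ F]
    (h : F) (hsa : IsSelfAdjoint h) :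
    ∃ q r : F, IsSelfAdjoint q ∧ IsSelfAdjoint r ∧ h = q + r ∧
      q ∈ Submodule.span ℂ {z : F | ∃ x y : F, z = x * y - y * x} ∧
      r ∈ Set.center F ∧ ‖q‖ ≤ 2 * ‖h‖ ∧ ‖r‖ ≤ ‖h‖ := by
  have : CompleteSpace F := FiniteDimensional.complete ℂ F
  let : CStarAlgebra F := {}
  have : CompactSpace (unitary F) := isCompact_iff_compactSpace.mp isCompact_unitary
  let : MeasurableSpace (unitary F) := borel _
  have : BorelSpace (unitary F) := ⟨rfl⟩
  let μ := Measure.haarMeasure (⊤ : TopologicalSpace.PositiveCompacts (unitary F))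
  have : IsProbabilityMeasure μ := ⟨by
    rw [← TopologicalSpace.PositiveCompacts.coe_top (α := unitary F)]
    exact Measure.haarMeasure_self⟩
  have hr := norm_unitaryAverage_le (μ := μ) h
  refine ⟨h - unitaryAverage μ h, unitaryAverage μ h, hsa.sub (isSelfAdjoint_unitaryAverage hsa),
    isSelfAdjoint_unitaryAverage hsa, (sub_add_cancel _ _).symm,
    sub_unitaryAverage_mem_span_commutators h, unitaryAverage_mem_center h, ?_, hr⟩
  calc ‖h - unitaryAverage μ h‖ ≤ ‖h‖ + ‖unitaryAverage μ h‖ := norm_sub_le _ _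
    _ ≤ 2 * ‖h‖ := by linarith
end
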